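/- For every integer k ≥ 0, every starting slot s ∈ [[0, 2^k − 1]], every i ∈ [[0, last_{k,s}]], and every l ∈ [[0, l_{k,s,i}]], the union ∪_{j=0}^{l} X_{k,s,i,j} satisfies ∪_{j=0}^{l} X_{k,s,i,j} = { rev_k(t_{k,s,i}) + 2^{k−l} · x' | x' ∈ [[0, 2^l − 1]] }, and moreover rev_k(t_{k,s,i}) < 2^{k−l}. -/

import Mathlib

/-- `revBit k x` is the `k`-bit reversal of `x`:
if `x = (x_{k-1}, …, x_0)₂` then `revBit k x = (x_0, …, x_{k-1})₂`. -/
def revBit (k x : ℕ) : ℕ := ∑ i ∈ Finset.range k, (x / 2 ^ i % 2) * 2 ^ (k - 1 - i)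

/-- `lmax k x = max { l ≤ k | x mod 2^l = 0 }`. -/
def lmax (k x : ℕ) : ℕ := Nat.findGreatest (fun l => x % 2 ^ l = 0) k

/-- The sequence of time slots `t_{k,s,i}`. -/
def tSlot (k s : ℕ) : ℕ → ℕ
  | 0 => s
  | i + 1 => (tSlot k s i + 2 ^ lmax k (tSlot k s i)) % 2 ^ k

/-- `lVal k s i = l_{k,s,i} = max { l ≤ k | t_{k,s,i} mod 2^l = 0 }`. -/
def lVal (k s i : ℕ) : ℕ := lmax k (tSlot k s i)

/-- `lastIdx k s = min { i ≥ 0 | t_{k,s,i} = 0 }`. -/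
noncomputable def lastIdx (k s : ℕ) : ℕ := sInf {i | tSlot k s i = 0}

/-- The segment of time slots `Y_{k,s,i}`: for `i < last` it is
`[[t_{k,s,i}, t_{k,s,i+1} - 1]]` and for `i = last` it is `[[0, 2^k - 1]]`. -/
noncomputable def Yseg (k s i : ℕ) : Set ℕ :=
  if i < lastIdx k s then Set.Icc (tSlot k s i) (tSlot k s (i + 1) - 1)
  else Set.Icc 0 (2 ^ k - 1)


/-- `Ysub k s i l = Y_{k,s,i,l} = [[t_{k,s,i} + ⌊2^{l-1}⌋, t_{k,s,i} + 2^l - 1]]`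
(note `⌊2^{l-1}⌋ = 2^l / 2` for natural `l`). -/
def Ysub (k s i l : ℕ) : Set ℕ :=
  Set.Icc (tSlot k s i + 2 ^ l / 2) (tSlot k s i + 2 ^ l - 1)

/-- `Xsub k s i l = rev_k Y_{k,s,i,l}`. -/
def Xsub (k s i l : ℕ) : Set ℕ := revBit k '' Ysub k s i l

lemma revBit_zero (x : ℕ) : revBit 0 x = 0 := by simp [revBit]

lemma revBit_succ (k x : ℕ) :
    revBit (k+1) x = (x % 2) * 2 ^ k + revBit k (x / 2) := by
  unfold revBit
  rw [Finset.sum_range_succ', add_comm]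
  congr 1
  · norm_num
  · apply Finset.sum_congr rfl
    intro j hj
    have hx : x / 2 ^ (j+1) = x / 2 / 2 ^ j := by
      rw [Nat.div_div_eq_div_mul, pow_succ, mul_comm, ← pow_succ']
    rw [hx]
    congr 2
    omega

lemma revBit_lt (k x : ℕ) : revBit k x < 2 ^ k := by
  induction k generalizing x with
  | zero => simp [revBit_zero]
  | succ k ih =>
    rw [revBit_succ]
    have h1 := ih (x / 2)
    have h2 : x % 2 ≤ 1 := by omega
    have h3 : (x % 2) * 2 ^ k ≤ 2 ^ k := by nlinarith
    rw [pow_succ]; omega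

lemma revBit_lt_of_dvd (k l x : ℕ) (h : 2 ^ l ∣ x) : revBit k x < 2 ^ (k - l) := by
  induction l generalizing k x with
  | zero => simpa using revBit_lt k x
  | succ l ih =>
    cases k with
    | zero => simp [revBit_zero]
    | succ k =>
      obtain ⟨c, rfl⟩ := h
      rw [revBit_succ]
      have h1 : 2 ^ (l+1) * c % 2 = 0 := by
        have : 2 ∣ 2 ^ (l+1) * c := Dvd.dvd.mul_right (dvd_pow_self 2 (Nat.succ_ne_zero l)) c
        omega
      have h2 : 2 ^ (l+1) * c / 2 = 2 ^ l * c := by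
        rw [pow_succ, mul_comm (2^l) 2, mul_assoc, Nat.mul_div_cancel_left _ (by norm_num)]
      rw [h1, h2, zero_mul, zero_add]
      have := ih k (2 ^ l * c) ⟨c, rfl⟩
      simpa using this

lemma revBit_add (k l a b : ℕ) (hk : l ≤ k) (ha : 2 ^ l ∣ a) (hb : b < 2 ^ l) :
    revBit k (a + b) = revBit k a + 2 ^ (k - l) * revBit l b := by
  induction l generalizing k a b with
  | zero =>
    interval_cases b
    simp [revBit_zero]
  | succ l ih =>
    obtain ⟨k, rfl⟩ : ∃ k', k = k' + 1 := ⟨k - 1, by omega⟩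
    obtain ⟨c, rfl⟩ := ha
    have heven : 2 ^ (l+1) * c % 2 = 0 := by
      have : 2 ∣ 2 ^ (l+1) * c := Dvd.dvd.mul_right (dvd_pow_self 2 (Nat.succ_ne_zero l)) c
      omega
    have hdiv : (2 ^ (l+1) * c + b) / 2 = 2 ^ l * c + b / 2 := by
      have h2 : 2 ^ (l+1) * c = 2 * (2 ^ l * c) := by ring
      omega
    have hdiv2 : 2 ^ (l+1) * c / 2 = 2 ^ l * c := by
      have h2 : 2 ^ (l+1) * c = 2 * (2 ^ l * c) := by ring
      omega
    have hmod : (2 ^ (l+1) * c + b) % 2 = b % 2 := by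
      omega
    rw [revBit_succ, revBit_succ, revBit_succ, hmod, hdiv, hdiv2, heven,
      ih k (2 ^ l * c) (b / 2) (by omega) ⟨c, rfl⟩ (by rw [pow_succ] at hb; omega)]
    have hpow : 2 ^ (k + 1 - (l + 1)) * 2 ^ l = 2 ^ k := by
      rw [← pow_add]; congr 1; omega
    have hkl : k + 1 - (l + 1) = k - l := by omega
    rw [hkl] at hpow ⊢
    have hdist : 2 ^ (k - l) * (b % 2 * 2 ^ l + revBit l (b / 2)) =
        b % 2 * 2 ^ k + 2 ^ (k - l) * revBit l (b / 2) := by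
      rw [mul_add]
      congr 1
      rw [← hpow]; ring
    omega

lemma revBit_top (l c d : ℕ) (hc : c < 2 ^ l) (hd : d ≤ 1) :
    revBit (l+1) (c + d * 2 ^ l) = d + 2 * revBit l c := by
  induction l generalizing c d with
  | zero =>
    interval_cases c
    rw [revBit_succ]
    simp [revBit_zero]
    omega
  | succ l ih =>
    rw [revBit_succ]
    have h1 : (c + d * 2 ^ (l+1)) % 2 = c % 2 := by
      have : d * 2 ^ (l+1) = 2 * (d * 2 ^ l) := by ring
      omega
    have h2 : (c + d * 2 ^ (l+1)) / 2 = c / 2 + d * 2 ^ l := by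
      have : d * 2 ^ (l+1) = 2 * (d * 2 ^ l) := by ring
      omega
    rw [h1, h2, ih (c / 2) d (by rw [pow_succ] at hc; omega) hd, revBit_succ]
    ring

lemma revBit_revBit (l b : ℕ) (hb : b < 2 ^ l) : revBit l (revBit l b) = b := by
  induction l generalizing b with
  | zero => interval_cases b; simp [revBit_zero]
  | succ l ih =>
    have h := revBit_succ l b
    rw [h, add_comm (b % 2 * 2 ^ l),
      revBit_top l (revBit l (b / 2)) (b % 2) (revBit_lt _ _) (by omega),
      ih (b / 2) (by rw [pow_succ] at hb; omega)]
    omega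

lemma Yunion (k s i l : ℕ) :
    (⋃ j ∈ Finset.range (l + 1), Ysub k s i j) =
      Set.Icc (tSlot k s i) (tSlot k s i + 2 ^ l - 1) := by
  induction l with
  | zero => simp [Ysub]
  | succ l ih =>
    rw [Finset.range_add_one, Finset.set_biUnion_insert, ih, Set.union_comm]
    ext x
    have hp : 0 < 2 ^ l := Nat.pow_pos (by norm_num)
    have h2 : 2 ^ (l + 1) = 2 ^ l * 2 := pow_succ 2 l
    simp only [Set.mem_union, Set.mem_Icc, Ysub, h2]
    omega

/-- Lemma 3 (union-`X`-Lemma): for `l ∈ [[0, l_{k,s,i}]]`,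
`⋃_{j=0}^{l} X_{k,s,i,j} = { rev_k(t_{k,s,i}) + 2^{k-l} · x' | x' ∈ [[0, 2^l - 1]] }`
and `rev_k(t_{k,s,i}) < 2^{k-l}`. -/
theorem stmt_2 (k s i l : ℕ) (hs : s < 2 ^ k) (hi : i ≤ lastIdx k s)
    (hl : l ≤ lVal k s i) :
    (⋃ j ∈ Finset.range (l + 1), Xsub k s i j) =
      {z : ℕ | ∃ x' : ℕ, x' ≤ 2 ^ l - 1 ∧
        z = revBit k (tSlot k s i) + 2 ^ (k - l) * x'} ∧
    revBit k (tSlot k s i) < 2 ^ (k - l) := by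
  set t := tSlot k s i with ht
  have hlk : l ≤ k := le_trans hl (Nat.findGreatest_le k)
  have hdvd : 2 ^ l ∣ t := by
    have h0 : t % 2 ^ 0 = 0 := by omega
    have hspec : t % 2 ^ lVal k s i = 0 :=
      Nat.findGreatest_spec (P := fun l => t % 2 ^ l = 0) (Nat.zero_le k) h0
    exact dvd_trans (pow_dvd_pow 2 hl) (Nat.dvd_of_mod_eq_zero hspec)
  refine ⟨?_, revBit_lt_of_dvd k l t hdvd⟩
  have himg : (⋃ j ∈ Finset.range (l + 1), Xsub k s i j) =
      revBit k '' Set.Icc t (t + 2 ^ l - 1) := by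
    rw [← Yunion k s i l]
    simp only [Xsub]
    rw [Set.image_iUnion₂]
  rw [himg]
  have hp : 0 < 2 ^ l := Nat.pow_pos (by norm_num)
  ext z
  simp only [Set.mem_image, Set.mem_Icc, Set.mem_setOf_eq]
  constructor
  · rintro ⟨y, ⟨hy1, hy2⟩, rfl⟩
    obtain ⟨b, rfl⟩ : ∃ b, y = t + b := ⟨y - t, by omega⟩
    have hb : b < 2 ^ l := by omega
    rw [revBit_add k l t b hlk hdvd hb]
    exact ⟨revBit l b, by have := revBit_lt l b; omega, rfl⟩
  · rintro ⟨x', hx', rfl⟩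
    have hx'' : x' < 2 ^ l := by omega
    refine ⟨t + revBit l x', ⟨by omega, by have := revBit_lt l x'; omega⟩, ?_⟩
    rw [revBit_add k l t (revBit l x') hlk hdvd (revBit_lt l x'),
      revBit_revBit l x' hx'']
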